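/- For every mixed stopping strategy p and every x ∈ E: φ_p(x) = E_x[ 1_{τ_p<∞} Σ_{i≥0} (Π_{j=1}^{i} (1 − p_{X_{j−1}})) p_{X_i} f(X_i) + 1_{τ_p=∞} lim_n f(X_n) ] and E_x[φ_p(X_1)] = E_x[ 1_{τ_p<∞} Σ_{i≥1} (Π_{j=2}^{i} (1 − p_{X_{j−1}})) p_{X_i} f(X_i) + 1_{τ_p=∞} lim_n f(X_n) ] (with empty products equal to 1); moreover, for each fixed x ∈ E the maps p ↦ φ_p(x) and p ↦ E_x[φ_p(X_1)] are continuous on [0,1]^N. -/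

import Mathlib

/-!
Analytic model of the time-inconsistent stopping framework of Christensen & Lindensjö,
"Time-inconsistent stopping, myopic adjustment & equilibrium stability".

A time-homogeneous Markov chain `X` on a finite state space `E` is encoded by its
transition matrix `P` (`P x y = P_x(X_1 = y)`).  A mixed stopping strategy is a vector
`p ∈ [0,1]^E`; the associated stopping time is `τ_p = min {n ≥ 0 : Y_n ≤ p_{X_n}}`,
where the `Y_n` are i.i.d. uniform randomization devices.  The quantity
`phi P p f x = E_x[f(X_{τ_p})]` (with the convention `f(X_{τ_p}) := lim_n f(X_n)` on
`{τ_p = ∞}`, the limit existing a.s. by absorption) is realized analytically, via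
dominated convergence, as the limit in `n` of the finite-horizon values
`phiSeq P p f n x = E_x[f(X_{τ_p ∧ n})]`, which satisfy the one-step recursion given
by the Markov property.  Likewise `step P v x = E_x[v(X_1)]`.
-/

open Filter

variable {E : Type*}

/-- One-step expectation operator: `step P v x = E_x[v(X_1)] = ∑ y, P x y * v y`. -/
noncomputable def step [Fintype E] (P : E → E → ℝ) (v : E → ℝ) (x : E) : ℝ :=
  ∑ y, P x y * v y

/-- Finite-horizon value `phiSeq P p f n x = E_x[f(X_{τ_p ∧ n})]`. -/
noncomputable def phiSeq [Fintype E] (P : E → E → ℝ) (p f : E → ℝ) : ℕ → E → ℝ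
  | 0 => f
  | n + 1 => fun x => p x * f x + (1 - p x) * step P (phiSeq P p f n) x

/-- `phi P p f x = E_x[f(X_{τ_p})]`, with the convention `f(X_{τ_p}) := lim_n f(X_n)`
on `{τ_p = ∞}`; by dominated convergence it is the limit of the finite-horizon values. -/
noncomputable def phi [Fintype E] (P : E → E → ℝ) (p f : E → ℝ) (x : E) : ℝ :=
  limUnder atTop fun n => phiSeq P p f n x

/-- `P` is a transition matrix (row-stochastic). -/
def IsTransition [Fintype E] (P : E → E → ℝ) : Prop :=
  (∀ x y, 0 ≤ P x y) ∧ ∀ x, ∑ y, P x y = 1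

/-- `a` is an absorbing state of the chain. -/
def IsAbsorbingState (P : E → E → ℝ) (a : E) : Prop := P a a = 1

/-- The chain is absorbing: from each starting state, some absorbing state is reached
with positive probability in a finite number of steps. -/
def IsAbsorbingChain [Fintype E] [DecidableEq E] (P : E → E → ℝ) : Prop :=
  ∀ x : E, ∃ (a : E) (n : ℕ), IsAbsorbingState P a ∧ 0 < ((Matrix.of P) ^ n) x a

/-- A mixed stopping strategy: a vector in `[0,1]^E`. -/
def IsStrategy (p : E → ℝ) : Prop := ∀ x, p x ∈ Set.Icc (0 : ℝ) 1

/-- `Kval P f h g p x q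
      = q f(x) + (1-q) E_x[φ_p(X_1)] + g (q h(x) + (1-q) E_x[ψ_p(X_1)])`. -/
noncomputable def Kval [Fintype E] (P : E → E → ℝ) (f h : E → ℝ) (g : ℝ → ℝ)
    (p : E → ℝ) (x : E) (q : ℝ) : ℝ :=
  q * f x + (1 - q) * step P (phi P p f) x
    + g (q * h x + (1 - q) * step P (phi P p h) x)

/-- `Jval P f h g p x = φ_p(x) + g(ψ_p(x)) = E_x[f(X_{τ_p})] + g(E_x[h(X_{τ_p})])`. -/
noncomputable def Jval [Fintype E] (P : E → E → ℝ) (f h : E → ℝ) (g : ℝ → ℝ)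
    (p : E → ℝ) (x : E) : ℝ :=
  phi P p f x + g (phi P p h x)

/-- Subgame perfect Nash equilibrium (condition (EqI)). -/
def IsEquilibrium [Fintype E] (P : E → E → ℝ) (f h : E → ℝ) (g : ℝ → ℝ)
    (p : E → ℝ) : Prop :=
  ∀ x : E, ∀ q ∈ Set.Icc (0 : ℝ) 1, Kval P f h g p x q ≤ Jval P f h g p x

/-- Expectation over the chain of a functional of the first `n+1` positions:
`pathExp P x n F = E_x[F (X_0, …, X_n)]`. -/
noncomputable def pathExp [Fintype E] (P : E → E → ℝ) :
    E → (n : ℕ) → ((Fin (n + 1) → E) → ℝ) → ℝ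
  | x, 0, F => F (fun _ => x)
  | x, n + 1, F => ∑ y, P x y * pathExp P y n (fun ω => F (Fin.cons x ω))

/-!
Write `T v x = (1 - p x) E_x[v(X_1)]`. Unfolding the recursion,
`phiSeq n = ∑_{i ≤ n} Tⁱ (p f) + Tⁿ ((1 - p) f)`, and these two terms are the `pathExp`
expressions of the statement. Since `phiSeq (n + k) - phiSeq n = Tⁿ (phiSeq k - f)` and
`phiSeq k - f` vanishes at absorbing states, it is at most `2 ‖f‖ P_x(X_n is not absorbed)`,
a bound that decays geometrically and does not depend on `p`. Hence `phiSeq` converges uniformly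
on strategies, and continuity follows because each `phiSeq n` is polynomial in `p`. For the
constant function `‖f‖` the terms of the series are nonnegative with partial sums at most `‖f‖`,
and they dominate the terms for `f`; so the series converges absolutely, and the remainder
`Tⁿ ((1 - p) f)` converges to the `τ_p = ∞` term.
-/

open Finset Topology

section

variable [Fintype E] {P : E → E → ℝ}

theorem IsTransition.eq_zero_of_absorbing (hP : IsTransition P) {a y : E}
    (ha : IsAbsorbingState P a) (hy : y ≠ a) : P a y = 0 := by
  classical
  have hrest : ∑ z ∈ univ.erase a, P a z = 0 := by
    have := add_sum_erase univ (P a) (mem_univ a)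
    rw [hP.2 a, ha] at this
    linarith
  exact (sum_eq_zero_iff_of_nonneg fun z _ => hP.1 a z).1 hrest y (mem_erase.2 ⟨hy, mem_univ y⟩)

theorem IsTransition.step_of_absorbing (hP : IsTransition P) {a : E}
    (ha : IsAbsorbingState P a) (v : E → ℝ) : step P v a = v a := by
  classical
  rw [step, sum_eq_single a (fun y _ hy => by rw [hP.eq_zero_of_absorbing ha hy, zero_mul])
    (by simp), ha, one_mul]

theorem IsTransition.step_const (hP : IsTransition P) (c : ℝ) (x : E) :
    step P (fun _ => c) x = c := by
  rw [step, ← sum_mul, hP.2 x, one_mul]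

theorem IsTransition.step_mono (hP : IsTransition P) {v w : E → ℝ} (h : ∀ y, v y ≤ w y)
    (x : E) : step P v x ≤ step P w x :=
  sum_le_sum fun y _ => mul_le_mul_of_nonneg_left (h y) (hP.1 x y)

theorem IsTransition.step_nonneg (hP : IsTransition P) {v : E → ℝ} (h : ∀ y, 0 ≤ v y)
    (x : E) : 0 ≤ step P v x :=
  sum_nonneg fun y _ => mul_nonneg (hP.1 x y) (h y)

theorem IsTransition.abs_step_le (hP : IsTransition P) {v w : E → ℝ} (h : ∀ y, |v y| ≤ w y)
    (x : E) : |step P v x| ≤ step P w x :=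
  (abs_sum_le_sum_abs _ _).trans <| sum_le_sum fun y _ => by
    rw [abs_mul, abs_of_nonneg (hP.1 x y)]
    exact mul_le_mul_of_nonneg_left (h y) (hP.1 x y)

theorem step_const_mul (c : ℝ) (v : E → ℝ) (x : E) :
    step P (fun y => c * v y) x = c * step P v x := by
  simp only [step, mul_sum]
  exact sum_congr rfl fun y _ => by ring

theorem step_sub (v w : E → ℝ) (x : E) :
    step P (fun y => v y - w y) x = step P v x - step P w x := by
  simp only [step, mul_sub, sum_sub_distrib]

theorem step_add (v w : E → ℝ) (x : E) :
    step P (fun y => v y + w y) x = step P v x + step P w x := by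
  simp only [step, mul_add, sum_add_distrib]

theorem step_finsetSum {ι : Type*} (s : Finset ι) (v : ι → E → ℝ) (x : E) :
    step P (fun y => ∑ i ∈ s, v i y) x = ∑ i ∈ s, step P (v i) x := by
  simp only [step, mul_sum]
  exact sum_comm

open Classical in
/-- `nonAbsorbedProb P n x = P_x(X_n is not an absorbing state)`. -/
noncomputable def nonAbsorbedProb (P : E → E → ℝ) : ℕ → E → ℝ
  | 0 => fun x => if IsAbsorbingState P x then 0 else 1
  | n + 1 => step P (nonAbsorbedProb P n)

theorem nonAbsorbedProb_nonneg (hP : IsTransition P) : ∀ n x, 0 ≤ nonAbsorbedProb P n x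
  | 0, x => by unfold nonAbsorbedProb; split_ifs <;> norm_num
  | n + 1, x => hP.step_nonneg (nonAbsorbedProb_nonneg hP n) x

theorem nonAbsorbedProb_le_one (hP : IsTransition P) : ∀ n x, nonAbsorbedProb P n x ≤ 1
  | 0, x => by unfold nonAbsorbedProb; split_ifs <;> norm_num
  | n + 1, x => (hP.step_mono (nonAbsorbedProb_le_one hP n) x).trans_eq (hP.step_const 1 x)

theorem nonAbsorbedProb_of_absorbing (hP : IsTransition P) {a : E}
    (ha : IsAbsorbingState P a) : ∀ n, nonAbsorbedProb P n a = 0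
  | 0 => if_pos ha
  | n + 1 => (hP.step_of_absorbing ha _).trans (nonAbsorbedProb_of_absorbing hP ha n)

theorem nonAbsorbedProb_add_le (hP : IsTransition P) {m : ℕ} {c : ℝ}
    (hc : ∀ y, nonAbsorbedProb P m y ≤ c) :
    ∀ n x, nonAbsorbedProb P (n + m) x ≤ c * nonAbsorbedProb P n x
  | 0, x => by
    by_cases hx : IsAbsorbingState P x
    · simp [nonAbsorbedProb_of_absorbing hP hx]
    · simpa [nonAbsorbedProb, hx] using hc x
  | n + 1, x => by
    rw [Nat.add_right_comm]
    calc step P (nonAbsorbedProb P (n + m)) x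
        ≤ step P (fun y => c * nonAbsorbedProb P n y) x :=
          hP.step_mono (nonAbsorbedProb_add_le hP hc n) x
      _ = c * nonAbsorbedProb P (n + 1) x := step_const_mul c _ x

theorem nonAbsorbedProb_antitone (hP : IsTransition P) (x : E) :
    Antitone fun n => nonAbsorbedProb P n x := by
  intro n m hnm
  obtain ⟨k, rfl⟩ := Nat.exists_eq_add_of_le hnm
  simpa using nonAbsorbedProb_add_le hP (nonAbsorbedProb_le_one hP k) n x

theorem nonAbsorbedProb_le_one_sub_pow [DecidableEq E] (hP : IsTransition P) {a : E}
    (ha : IsAbsorbingState P a) :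
    ∀ n x, nonAbsorbedProb P n x ≤ 1 - (Matrix.of P ^ n) x a
  | 0, x => by
    by_cases hx : x = a
    · subst hx
      simp [nonAbsorbedProb_of_absorbing hP ha]
    · simpa [Matrix.one_apply_ne hx] using nonAbsorbedProb_le_one hP 0 x
  | n + 1, x => by
    rw [pow_succ', Matrix.mul_apply]
    calc step P (nonAbsorbedProb P n) x
        ≤ step P (fun z => 1 - (Matrix.of P ^ n) z a) x :=
          hP.step_mono (nonAbsorbedProb_le_one_sub_pow hP ha n) x
      _ = 1 - ∑ z, Matrix.of P x z * (Matrix.of P ^ n) z a := by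
          rw [step_sub, hP.step_const]
          rfl

theorem exists_forall_nonAbsorbedProb_lt_one [DecidableEq E] (hP : IsTransition P)
    (habs : IsAbsorbingChain P) : ∃ N, ∀ x, nonAbsorbedProb P N x < 1 := by
  have hlt : ∀ x, ∃ n, nonAbsorbedProb P n x < 1 := fun x => by
    obtain ⟨a, n, ha, hpos⟩ := habs x
    exact ⟨n, (nonAbsorbedProb_le_one_sub_pow hP ha n x).trans_lt (by linarith)⟩
  choose n hn using hlt
  exact ⟨univ.sup n, fun x =>
    (nonAbsorbedProb_antitone hP x (le_sup (mem_univ x))).trans_lt (hn x)⟩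

theorem tendsto_nonAbsorbedProb [DecidableEq E] (hP : IsTransition P)
    (habs : IsAbsorbingChain P) (x : E) :
    Tendsto (fun n => nonAbsorbedProb P n x) atTop (𝓝 0) := by
  have : Nonempty E := ⟨x⟩
  obtain ⟨N, hN⟩ := exists_forall_nonAbsorbedProb_lt_one hP habs
  -- `N + 1` rather than `N`, so that `n / (N + 1)` below is a genuine division
  obtain ⟨y₀, hy₀⟩ := Finite.exists_max (nonAbsorbedProb P (N + 1))
  set c := nonAbsorbedProb P (N + 1) y₀
  have hc1 : c < 1 := (nonAbsorbedProb_antitone hP y₀ N.le_succ).trans_lt (hN y₀)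
  have hpow : ∀ k y, nonAbsorbedProb P ((N + 1) * k) y ≤ c ^ k := by
    intro k
    induction k with
    | zero => exact nonAbsorbedProb_le_one hP 0
    | succ k ih =>
      intro y
      calc nonAbsorbedProb P ((N + 1) * k + (N + 1)) y
          ≤ c * nonAbsorbedProb P ((N + 1) * k) y := nonAbsorbedProb_add_le hP hy₀ _ y
        _ ≤ c * c ^ k := mul_le_mul_of_nonneg_left (ih y) (nonAbsorbedProb_nonneg hP _ _)
        _ = c ^ (k + 1) := (pow_succ' c k).symm
  refine squeeze_zero (nonAbsorbedProb_nonneg hP · x) (fun n => ?_)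
    ((tendsto_pow_atTop_nhds_zero_of_lt_one (nonAbsorbedProb_nonneg hP _ _) hc1).comp
      (Nat.tendsto_div_const_atTop N.succ_ne_zero))
  exact (nonAbsorbedProb_antitone hP x (Nat.mul_div_le n (N + 1))).trans (hpow _ x)

variable {p f : E → ℝ} {M : ℝ}

theorem phiSeq_succ (n : ℕ) (x : E) :
    phiSeq P p f (n + 1) x = p x * f x + (1 - p x) * step P (phiSeq P p f n) x := rfl

theorem abs_phiSeq_le (hP : IsTransition P) (hp : IsStrategy p) (hf : ∀ y, |f y| ≤ M) :
    ∀ n x, |phiSeq P p f n x| ≤ M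
  | 0, x => hf x
  | n + 1, x => by
    obtain ⟨hp0, hp1⟩ := hp x
    have hstep : |step P (phiSeq P p f n) x| ≤ M :=
      (hP.abs_step_le (abs_phiSeq_le hP hp hf n) x).trans_eq (hP.step_const M x)
    calc |phiSeq P p f (n + 1) x|
        ≤ p x * |f x| + (1 - p x) * |step P (phiSeq P p f n) x| := by
          refine (abs_add_le _ _).trans_eq ?_
          rw [abs_mul, abs_mul, abs_of_nonneg hp0, abs_of_nonneg (sub_nonneg.2 hp1)]
      _ ≤ p x * M + (1 - p x) * M :=
          add_le_add (mul_le_mul_of_nonneg_left (hf x) hp0)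
            (mul_le_mul_of_nonneg_left hstep (sub_nonneg.2 hp1))
      _ = M := by ring

theorem phiSeq_of_absorbing (hP : IsTransition P) {a : E} (ha : IsAbsorbingState P a) :
    ∀ n, phiSeq P p f n a = f a
  | 0 => rfl
  | n + 1 => by
    rw [phiSeq_succ, hP.step_of_absorbing ha, phiSeq_of_absorbing hP ha n]
    ring

theorem abs_phiSeq_add_sub_le (hP : IsTransition P) (hp : IsStrategy p)
    (hf : ∀ y, |f y| ≤ M) :
    ∀ n k x, |phiSeq P p f (n + k) x - phiSeq P p f n x| ≤ 2 * M * nonAbsorbedProb P n x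
  | 0, k, x => by
    by_cases hx : IsAbsorbingState P x
    · simp [phiSeq_of_absorbing hP hx, nonAbsorbedProb_of_absorbing hP hx]
    · simp only [zero_add, nonAbsorbedProb, if_neg hx, mul_one]
      linarith [abs_sub (phiSeq P p f k x) (phiSeq P p f 0 x), abs_phiSeq_le hP hp hf k x,
        abs_phiSeq_le hP hp hf 0 x]
  | n + 1, k, x => by
    obtain ⟨hp0, hp1⟩ := hp x
    have hdiff : phiSeq P p f (n + 1 + k) x - phiSeq P p f (n + 1) x
        = (1 - p x) * step P (fun y => phiSeq P p f (n + k) y - phiSeq P p f n y) x := by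
      rw [Nat.add_right_comm, phiSeq_succ, phiSeq_succ, step_sub]
      ring
    rw [hdiff, abs_mul, abs_of_nonneg (sub_nonneg.2 hp1)]
    calc (1 - p x) * |step P (fun y => phiSeq P p f (n + k) y - phiSeq P p f n y) x|
        ≤ 1 * step P (fun y => 2 * M * nonAbsorbedProb P n y) x :=
          mul_le_mul (by linarith) (hP.abs_step_le (abs_phiSeq_add_sub_le hP hp hf n k) x)
            (abs_nonneg _) zero_le_one
      _ = 2 * M * nonAbsorbedProb P (n + 1) x := by rw [one_mul, step_const_mul]; rfl

theorem abs_phiSeq_sub_le (hP : IsTransition P) (hp : IsStrategy p) (hf : ∀ y, |f y| ≤ M)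
    {n m : ℕ} (hnm : n ≤ m) (x : E) :
    |phiSeq P p f m x - phiSeq P p f n x| ≤ 2 * M * nonAbsorbedProb P n x := by
  obtain ⟨k, rfl⟩ := Nat.exists_eq_add_of_le hnm
  exact abs_phiSeq_add_sub_le hP hp hf n k x

theorem tendsto_phiSeq [DecidableEq E] (hP : IsTransition P) (habs : IsAbsorbingChain P)
    (hp : IsStrategy p) (x : E) :
    Tendsto (fun n => phiSeq P p f n x) atTop (𝓝 (phi P p f x)) := by
  obtain ⟨M, hf⟩ := Finite.exists_le fun y => |f y|
  have hcauchy : CauchySeq fun n => phiSeq P p f n x := by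
    refine cauchySeq_of_le_tendsto_0 (fun N => 4 * M * nonAbsorbedProb P N x)
      (fun n m N hn hm => ?_) (by simpa using (tendsto_nonAbsorbedProb hP habs x).const_mul _)
    rw [Real.dist_eq]
    linarith [abs_sub_le (phiSeq P p f n x) (phiSeq P p f N x) (phiSeq P p f m x),
      abs_sub_comm (phiSeq P p f N x) (phiSeq P p f m x),
      abs_phiSeq_sub_le hP hp hf hn x, abs_phiSeq_sub_le hP hp hf hm x]
  obtain ⟨L, hL⟩ := cauchySeq_tendsto_of_complete hcauchy
  rwa [phi, hL.limUnder_eq]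

theorem abs_phi_sub_phiSeq_le [DecidableEq E] (hP : IsTransition P)
    (habs : IsAbsorbingChain P) (hp : IsStrategy p) (hf : ∀ y, |f y| ≤ M) (n : ℕ) (x : E) :
    |phi P p f x - phiSeq P p f n x| ≤ 2 * M * nonAbsorbedProb P n x :=
  le_of_tendsto (((tendsto_phiSeq hP habs hp x).sub_const _).abs) <|
    eventually_atTop.2 ⟨n, fun _ hm => abs_phiSeq_sub_le hP hp hf hm x⟩

theorem pathExp_const_mul (c : ℝ) :
    ∀ (n : ℕ) (x : E) (F : (Fin (n + 1) → E) → ℝ),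
      pathExp P x n (fun ω => c * F ω) = c * pathExp P x n F
  | 0, _, _ => rfl
  | n + 1, x, F => by
    simp only [pathExp, pathExp_const_mul c n, mul_sum]
    exact sum_congr rfl fun y _ => by ring

/-- `payoffStopAt P p f i x = E_x[1_{τ_p = i} f(X_i)]`. -/
noncomputable def payoffStopAt (P : E → E → ℝ) (p f : E → ℝ) (i : ℕ) (x : E) : ℝ :=
  pathExp P x i fun ω =>
    (∏ j : Fin i, (1 - p (ω j.castSucc))) * (p (ω (Fin.last i)) * f (ω (Fin.last i)))

/-- `payoffUnstopped P p f n x = E_x[1_{τ_p > n} f(X_n)]`. -/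
noncomputable def payoffUnstopped (P : E → E → ℝ) (p f : E → ℝ) (n : ℕ) (x : E) : ℝ :=
  pathExp P x n fun ω => (∏ j : Fin (n + 1), (1 - p (ω j))) * f (ω (Fin.last n))

theorem payoffStopAt_zero (x : E) : payoffStopAt P p f 0 x = p x * f x := by
  simp [payoffStopAt, pathExp]

theorem payoffStopAt_succ (i : ℕ) (x : E) :
    payoffStopAt P p f (i + 1) x = (1 - p x) * step P (payoffStopAt P p f i) x := by
  simp only [payoffStopAt, pathExp, Fin.prod_univ_succ, Fin.castSucc_zero, Fin.cons_zero,
    ← Fin.succ_castSucc, ← Fin.succ_last, Fin.cons_succ, mul_assoc, pathExp_const_mul]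
  rw [← step_const_mul]
  rfl

theorem payoffUnstopped_zero (x : E) : payoffUnstopped P p f 0 x = (1 - p x) * f x := by
  simp [payoffUnstopped, pathExp]

theorem payoffUnstopped_succ (n : ℕ) (x : E) :
    payoffUnstopped P p f (n + 1) x = (1 - p x) * step P (payoffUnstopped P p f n) x := by
  have hcons : ∀ ω : Fin (n + 1) → E,
      (∏ j : Fin (n + 2), (1 - p ((Fin.cons x ω : Fin (n + 2) → E) j)))
          * f ((Fin.cons x ω : Fin (n + 2) → E) (Fin.last (n + 1)))
        = (1 - p x) * ((∏ j : Fin (n + 1), (1 - p (ω j))) * f (ω (Fin.last n))) := fun ω => by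
    rw [Fin.prod_univ_succ, ← Fin.succ_last]
    simp only [Fin.cons_zero, Fin.cons_succ, mul_assoc]
  simp only [payoffUnstopped, pathExp, hcons, pathExp_const_mul]
  rw [← step_const_mul]
  rfl

theorem phiSeq_eq_sum_add_payoffUnstopped :
    ∀ n x, phiSeq P p f n x
      = ∑ i ∈ range (n + 1), payoffStopAt P p f i x + payoffUnstopped P p f n x
  | 0, x => by
    rw [sum_range_one, payoffStopAt_zero, payoffUnstopped_zero]
    exact (add_sub_cancel (p x * f x) (f x)).symm.trans (by ring)
  | n + 1, x => by
    have hstep : step P (phiSeq P p f n) x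
        = ∑ i ∈ range (n + 1), step P (payoffStopAt P p f i) x
          + step P (payoffUnstopped P p f n) x := by
      simp only [funext (phiSeq_eq_sum_add_payoffUnstopped n), step_add, step_finsetSum]
    rw [phiSeq_succ, hstep, sum_range_succ' _ (n + 1), payoffStopAt_zero, payoffUnstopped_succ]
    simp only [payoffStopAt_succ, mul_add, mul_sum]
    ring

theorem phiSeq_const (hP : IsTransition P) (c : ℝ) :
    ∀ n x, phiSeq P p (fun _ => c) n x = c
  | 0, _ => rfl
  | n + 1, x => by
    rw [phiSeq_succ, funext (phiSeq_const hP c n), hP.step_const]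
    ring

theorem payoffStopAt_nonneg (hP : IsTransition P) (hp : IsStrategy p) (hf : ∀ y, 0 ≤ f y) :
    ∀ i x, 0 ≤ payoffStopAt P p f i x
  | 0, x => payoffStopAt_zero (P := P) x ▸ mul_nonneg (hp x).1 (hf x)
  | i + 1, x => payoffStopAt_succ (P := P) i x ▸ mul_nonneg (sub_nonneg.2 (hp x).2)
      (hP.step_nonneg (payoffStopAt_nonneg hP hp hf i) x)

theorem payoffUnstopped_nonneg (hP : IsTransition P) (hp : IsStrategy p) (hf : ∀ y, 0 ≤ f y) :
    ∀ n x, 0 ≤ payoffUnstopped P p f n x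
  | 0, x => payoffUnstopped_zero (P := P) x ▸ mul_nonneg (sub_nonneg.2 (hp x).2) (hf x)
  | n + 1, x => payoffUnstopped_succ (P := P) n x ▸ mul_nonneg (sub_nonneg.2 (hp x).2)
      (hP.step_nonneg (payoffUnstopped_nonneg hP hp hf n) x)

theorem abs_payoffStopAt_le (hP : IsTransition P) (hp : IsStrategy p) {g : E → ℝ}
    (hfg : ∀ y, |f y| ≤ g y) : ∀ i x, |payoffStopAt P p f i x| ≤ payoffStopAt P p g i x
  | 0, x => by
    rw [payoffStopAt_zero, payoffStopAt_zero, abs_mul, abs_of_nonneg (hp x).1]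
    exact mul_le_mul_of_nonneg_left (hfg x) (hp x).1
  | i + 1, x => by
    rw [payoffStopAt_succ, payoffStopAt_succ, abs_mul, abs_of_nonneg (sub_nonneg.2 (hp x).2)]
    exact mul_le_mul_of_nonneg_left (hP.abs_step_le (abs_payoffStopAt_le hP hp hfg i) x)
      (sub_nonneg.2 (hp x).2)

theorem summable_payoffStopAt (hP : IsTransition P) (hp : IsStrategy p) (x : E) :
    Summable fun i => payoffStopAt P p f i x := by
  obtain ⟨M, hf⟩ := Finite.exists_le fun y => |f y|
  have hM : ∀ y, 0 ≤ M := fun y => (abs_nonneg _).trans (hf y)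
  have hpartial : ∀ n, ∑ i ∈ range n, payoffStopAt P p (fun _ => M) i x ≤ M := fun n => by
    have hsum := phiSeq_eq_sum_add_payoffUnstopped (P := P) (p := p) (f := fun _ => M) n x
    rw [phiSeq_const hP, sum_range_succ] at hsum
    linarith [payoffStopAt_nonneg hP hp hM n x, payoffUnstopped_nonneg hP hp hM n x]
  exact Summable.of_norm_bounded
    (summable_of_sum_range_le (payoffStopAt_nonneg hP hp hM · x) hpartial)
    (abs_payoffStopAt_le hP hp hf · x)

theorem tendsto_payoffUnstopped [DecidableEq E] (hP : IsTransition P)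
    (habs : IsAbsorbingChain P) (hp : IsStrategy p) (x : E) :
    Tendsto (fun n => payoffUnstopped P p f n x) atTop
      (𝓝 (phi P p f x - ∑' i, payoffStopAt P p f i x)) := by
  have hpartial : Tendsto (fun n => ∑ i ∈ range (n + 1), payoffStopAt P p f i x) atTop
      (𝓝 (∑' i, payoffStopAt P p f i x)) :=
    (summable_payoffStopAt hP hp x).hasSum.tendsto_sum_nat.comp (tendsto_add_atTop_nat 1)
  refine ((tendsto_phiSeq hP habs hp x).sub hpartial).congr fun n => ?_
  rw [phiSeq_eq_sum_add_payoffUnstopped]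
  ring

theorem phi_eq_tsum_add_limUnder [DecidableEq E] (hP : IsTransition P)
    (habs : IsAbsorbingChain P) (hp : IsStrategy p) (x : E) :
    phi P p f x = ∑' i, payoffStopAt P p f i x
      + limUnder atTop fun n => payoffUnstopped P p f n x := by
  rw [(tendsto_payoffUnstopped hP habs hp x).limUnder_eq]
  ring

theorem step_phi_eq_tsum_add_limUnder [DecidableEq E] (hP : IsTransition P)
    (habs : IsAbsorbingChain P) (hp : IsStrategy p) (x : E) :
    step P (phi P p f) x = ∑' i, step P (payoffStopAt P p f i) x
      + limUnder atTop fun n => step P (payoffUnstopped P p f n) x := by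
  have hseries : ∑' i, step P (payoffStopAt P p f i) x
      = step P (fun y => ∑' i, payoffStopAt P p f i y) x := by
    simp only [step, ← tsum_mul_left]
    exact Summable.tsum_finsetSum fun y _ => (summable_payoffStopAt hP hp y).mul_left _
  have hlim : Tendsto (fun n => step P (payoffUnstopped P p f n) x) atTop
      (𝓝 (step P (fun y => phi P p f y - ∑' i, payoffStopAt P p f i y) x)) :=
    tendsto_finsetSum _ fun y _ => (tendsto_payoffUnstopped hP habs hp y).const_mul _
  rw [hlim.limUnder_eq, hseries, step_sub]
  ring

theorem continuous_phiSeq (P : E → E → ℝ) (f : E → ℝ) :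
    ∀ n x, Continuous fun p : E → ℝ => phiSeq P p f n x
  | 0, _ => continuous_const
  | n + 1, x => by
    have := continuous_phiSeq P f n
    simp only [phiSeq_succ, step]
    fun_prop

theorem continuousOn_phi [DecidableEq E] (hP : IsTransition P) (habs : IsAbsorbingChain P)
    (f : E → ℝ) (x : E) : ContinuousOn (fun p : E → ℝ => phi P p f x) {p | IsStrategy p} := by
  obtain ⟨M, hf⟩ := Finite.exists_le fun y => |f y|
  have hunif : TendstoUniformlyOn (fun n (p : E → ℝ) => phiSeq P p f n x)
      (fun p => phi P p f x) atTop {p | IsStrategy p} := by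
    refine Metric.tendstoUniformlyOn_iff.2 fun ε hε => ?_
    have hlim : Tendsto (fun n => 2 * M * nonAbsorbedProb P n x) atTop (𝓝 0) := by
      simpa using (tendsto_nonAbsorbedProb hP habs x).const_mul (2 * M)
    filter_upwards [hlim.eventually_lt_const hε] with n hn p hp
    exact (Real.dist_eq _ _ ▸ abs_phi_sub_phiSeq_le hP habs hp hf n x).trans_lt hn
  exact hunif.continuousOn
    (Eventually.of_forall fun n => (continuous_phiSeq P f n x).continuousOn).frequently

theorem continuousOn_step_phi [DecidableEq E] (hP : IsTransition P)
    (habs : IsAbsorbingChain P) (f : E → ℝ) (x : E) :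
    ContinuousOn (fun p : E → ℝ => step P (phi P p f) x) {p | IsStrategy p} :=
  continuousOn_finsetSum _ fun y _ => continuousOn_const.mul (continuousOn_phi hP habs f y)

end

/-- Lemma A.2: the series representations
`φ_p(x) = E_x[1_{τ_p<∞} ∑_{i≥0} ∏_{j=1}^{i}(1-p_{X_{j-1}}) p_{X_i} f(X_i)
          + 1_{τ_p=∞} lim_n f(X_n)]` and
`E_x[φ_p(X_1)] = E_x[1_{τ_p<∞} ∑_{i≥1} ∏_{j=2}^{i}(1-p_{X_{j-1}}) p_{X_i} f(X_i)
          + 1_{τ_p=∞} lim_n f(X_n)]`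
(conditioning on the chain, the indicator terms have conditional probabilities given by
the corresponding products of `1 - p`, and the `τ_p = ∞` term is the limit of the
finite-horizon weighted expectations), together with continuity of
`p ↦ φ_p(x)` and `p ↦ E_x[φ_p(X_1)]` on `[0,1]^N`. -/
theorem phi_series_representation_and_continuity [Fintype E] [DecidableEq E]
    (P : E → E → ℝ) (hP : IsTransition P) (habs : IsAbsorbingChain P)
    (f : E → ℝ) :
    (∀ p : E → ℝ, IsStrategy p → ∀ x : E,
      phi P p f x =
        (∑' i : ℕ, pathExp P x i (fun ω =>
          (∏ j : Fin i, (1 - p (ω j.castSucc)))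
            * (p (ω (Fin.last i)) * f (ω (Fin.last i)))))
        + limUnder atTop (fun n => pathExp P x n (fun ω =>
            (∏ j : Fin (n + 1), (1 - p (ω j))) * f (ω (Fin.last n))))) ∧
    (∀ p : E → ℝ, IsStrategy p → ∀ x : E,
      step P (phi P p f) x =
        (∑' i : ℕ, pathExp P x (i + 1) (fun ω =>
          (∏ j : Fin i, (1 - p (ω j.succ.castSucc)))
            * (p (ω (Fin.last (i + 1))) * f (ω (Fin.last (i + 1))))))
        + limUnder atTop (fun n => pathExp P x (n + 1) (fun ω =>
            (∏ j : Fin (n + 1), (1 - p (ω j.succ))) * f (ω (Fin.last (n + 1)))))) ∧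
    (∀ x : E, ContinuousOn (fun p : E → ℝ => phi P p f x) {p | IsStrategy p}) ∧
    (∀ x : E, ContinuousOn (fun p : E → ℝ => step P (phi P p f) x) {p | IsStrategy p}) := by
  -- `pathExp P x (i + 1) F` unfolds to a `step P` of `pathExp _ i`, so the second identity is
  -- `step_phi_eq_tsum_add_limUnder` up to definitional unfolding.
  exact ⟨fun p hp x => phi_eq_tsum_add_limUnder hP habs hp x,
    fun p hp x => step_phi_eq_tsum_add_limUnder hP habs hp x,
    continuousOn_phi hP habs f, continuousOn_step_phi hP habs f⟩
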